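/- There is an absolute constant C > 0 such that the following holds. Let A and E be n × n real matrices, let σ₁ ≥ σ₂ be the two largest singular values of A with gap δ := σ₁ − σ₂ > 0, let v₁ be a unit singular vector of A corresponding to σ₁, and let v₁′ be a unit singular vector of A + E corresponding to the largest singular value of A + E. Then sin ∠(v₁, v₁′) ≤ C·‖E‖/δ. -/

import Mathlib

open MeasureTheory ProbabilityTheory Matrix

noncomputable def eucNorm {n : ℕ} (v : Fin n → ℝ) : ℝ := Real.sqrt (∑ i, v i ^ 2)

/-- The `k`-th largest singular value (k ≥ 1) of a square real matrix, via the
Courant–Fischer minimax characterization. -/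
noncomputable def singVal {n : ℕ} (M : Matrix (Fin n) (Fin n) ℝ) (k : ℕ) : ℝ :=
  sSup {x : ℝ | ∃ H : Submodule ℝ (Fin n → ℝ), Module.finrank ℝ H = k ∧
    x = sInf {y : ℝ | ∃ v ∈ H, eucNorm v = 1 ∧ y = eucNorm (M.mulVec v)}}

/-- The spectral norm of a square real matrix. -/
noncomputable def specNorm {n : ℕ} (M : Matrix (Fin n) (Fin n) ℝ) : ℝ :=
  sSup {x : ℝ | ∃ v : Fin n → ℝ, eucNorm v = 1 ∧ x = eucNorm (M.mulVec v)}

/-- `v` is a unit singular vector of `M` corresponding to the singular value `σ`. -/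
def IsUnitSingVec {n : ℕ} (M : Matrix (Fin n) (Fin n) ℝ) (σ : ℝ) (v : Fin n → ℝ) : Prop :=
  eucNorm v = 1 ∧ (Mᵀ * M).mulVec v = σ ^ 2 • v

/-- `sin ∠(u,v) = √(1 - (u·v)²)` for unit vectors `u, v`. -/
noncomputable def sinAngle {n : ℕ} (u v : Fin n → ℝ) : ℝ :=
  Real.sqrt (1 - (∑ i, u i * v i) ^ 2)

/-- `E` is a random Bernoulli matrix: independent entries, each `±1` with probability `1/2`. -/
def IsBernoulliMatrix {Ω : Type} [MeasurableSpace Ω] (μ : Measure Ω) {n : ℕ}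
    (E : Ω → Matrix (Fin n) (Fin n) ℝ) : Prop :=
  (∀ i j, Measurable fun ω => E ω i j) ∧
  iIndepFun (fun (p : Fin n × Fin n) (ω : Ω) => E ω p.1 p.2) μ ∧
  ∀ i j, μ {ω | E ω i j = 1} = 1/2 ∧ μ {ω | E ω i j = -1} = 1/2

/-!
Write `v₁' = c v₁ + w` with `w ⊥ v₁`, so that `sin ∠(v₁, v₁') = ‖w‖ =: s`. Since `v₁` is a top
right singular vector of `A`, the operator `A` keeps `w` orthogonal to `A v₁` and stretches it by at
most `σ₂` (Courant–Fischer on the plane `span {v₁, w}`). Testing the singular-vector equation of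
`B = A + E` against `w` gives `σ₁(B)² s² = ⟪B w, B v₁'⟫ ≤ σ₂² s² + ‖E‖ s (σ₂ + σ₁(B))`, hence
`s (σ₁(B) - σ₂) ≤ ‖E‖`. Weyl's inequality `σ₁(A) ≤ σ₁(B) + ‖E‖` and `s ≤ 1` then give
`s (σ₁ - σ₂) ≤ 2 ‖E‖`, i.e. the theorem with `C = 2`.
-/

open scoped RealInnerProductSpace

section InnerProductSpace

variable {V W : Type*} [NormedAddCommGroup V] [InnerProductSpace ℝ V]
  [NormedAddCommGroup W] [InnerProductSpace ℝ W]

theorem norm_sub_inner_smul_sq {u v : V} (hu : ‖u‖ = 1) (hv : ‖v‖ = 1) :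
    ‖v - ⟪u, v⟫ • u‖ ^ 2 = 1 - ⟪u, v⟫ ^ 2 := by
  rw [norm_sub_sq_real, norm_smul, real_inner_smul_right, real_inner_comm, hu, hv,
    Real.norm_eq_abs, mul_one, sq_abs]
  ring

theorem sqrt_one_sub_inner_sq_mul_sub_le {A E : V →ₗ[ℝ] W} {v₁ v₁' : V} {σ₂ g ε : ℝ}
    (hv₁ : ‖v₁‖ = 1) (hv₁' : ‖v₁'‖ = 1) (hAv₁ : ∀ x, ⟪x, v₁⟫ = 0 → ⟪A x, A v₁⟫ = 0)
    (hBv₁' : ∀ x, ⟪(A + E) x, (A + E) v₁'⟫ = g ^ 2 * ⟪x, v₁'⟫)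
    (hA : ∀ x, ⟪x, v₁⟫ = 0 → ‖A x‖ ≤ σ₂ * ‖x‖) (hE : ∀ x, ‖E x‖ ≤ ε * ‖x‖) (hg : 0 ≤ g) :
    √(1 - ⟪v₁, v₁'⟫ ^ 2) * (g - σ₂) ≤ ε := by
  set c := ⟪v₁, v₁'⟫
  set w := v₁' - c • v₁
  have hv₁'_eq : v₁' = w + c • v₁ := by simp [w]
  have hwv₁ : ⟪w, v₁⟫ = 0 := by
    simp only [w, inner_sub_left, real_inner_smul_left, real_inner_self_eq_norm_sq, hv₁,
      real_inner_comm v₁ v₁', c]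
    ring
  have hwv₁' : ⟪w, v₁'⟫ = ‖w‖ ^ 2 := by
    rw [hv₁'_eq, inner_add_right, real_inner_smul_right, hwv₁, real_inner_self_eq_norm_sq]
    ring
  rw [← norm_sub_inner_smul_sq hv₁ hv₁', Real.sqrt_sq (norm_nonneg _)]
  have hBv₁'_norm : ‖(A + E) v₁'‖ = g := by
    have h := hBv₁' v₁'
    rw [real_inner_self_eq_norm_sq, real_inner_self_eq_norm_sq, hv₁'] at h
    exact (pow_left_inj₀ (norm_nonneg _) hg two_ne_zero).1 (by simpa using h)
  have hε : 0 ≤ ε := by simpa [hv₁] using (norm_nonneg _).trans (hE v₁)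
  have hAw := hA w hwv₁
  have key : g ^ 2 * ‖w‖ ^ 2 ≤ σ₂ ^ 2 * ‖w‖ ^ 2 + ε * ‖w‖ * (σ₂ + g) :=
    calc g ^ 2 * ‖w‖ ^ 2 = ⟪(A + E) w, (A + E) v₁'⟫ := by rw [hBv₁', hwv₁']
      _ = ‖A w‖ ^ 2 + ⟪A w, E v₁'⟫ + ⟪E w, (A + E) v₁'⟫ := by
        rw [LinearMap.add_apply A E w, inner_add_left, LinearMap.add_apply A E v₁',
          inner_add_right, hv₁'_eq, map_add, map_smul, inner_add_right, real_inner_smul_right,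
          hAv₁ w hwv₁, real_inner_self_eq_norm_sq, ← hv₁'_eq]
        ring
      _ ≤ ‖A w‖ ^ 2 + ‖A w‖ * ‖E v₁'‖ + ‖E w‖ * ‖(A + E) v₁'‖ := by
        gcongr <;> exact real_inner_le_norm _ _
      _ ≤ (σ₂ * ‖w‖) ^ 2 + σ₂ * ‖w‖ * ε + ε * ‖w‖ * g := by
        rw [hBv₁'_norm]
        gcongr
        · exact (norm_nonneg _).trans hAw
        · simpa [hv₁'] using hE v₁'
        · exact hE w
      _ = σ₂ ^ 2 * ‖w‖ ^ 2 + ε * ‖w‖ * (σ₂ + g) := by ring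
  have hσ₂w : 0 ≤ σ₂ * ‖w‖ := (norm_nonneg _).trans hAw
  nlinarith [norm_nonneg w]

end InnerProductSpace

section Matrix

variable {n : ℕ}

theorem eucNorm_eq_norm_toLp (v : Fin n → ℝ) : eucNorm v = ‖WithLp.toLp 2 v‖ := by
  simp [eucNorm, EuclideanSpace.norm_eq]

theorem eucNorm_mulVec (M : Matrix (Fin n) (Fin n) ℝ) (v : Fin n → ℝ) :
    eucNorm (M *ᵥ v) = ‖M.toEuclideanLin (WithLp.toLp 2 v)‖ :=
  eucNorm_eq_norm_toLp _

theorem sInf_eucNorm_mulVec_le {M : Matrix (Fin n) (Fin n) ℝ} {c : ℝ} (hc : 0 ≤ c)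
    (hM : ∀ x, ‖M.toEuclideanLin x‖ ≤ c * ‖x‖) (H : Submodule ℝ (Fin n → ℝ)) :
    sInf {y : ℝ | ∃ v ∈ H, eucNorm v = 1 ∧ y = eucNorm (M *ᵥ v)} ≤ c := by
  rcases Set.eq_empty_or_nonempty {y : ℝ | ∃ v ∈ H, eucNorm v = 1 ∧ y = eucNorm (M *ᵥ v)}
    with hempty | ⟨_, hy⟩
  · rwa [hempty, Real.sInf_empty]
  · refine (csInf_le ⟨0, ?_⟩ hy).trans ?_
    · rintro _ ⟨u, -, -, rfl⟩
      exact Real.sqrt_nonneg _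
    · obtain ⟨v, -, hv, rfl⟩ := hy
      have h := hM (WithLp.toLp 2 v)
      rwa [← eucNorm_mulVec, ← eucNorm_eq_norm_toLp, hv, mul_one] at h

theorem singVal_le_of_norm_le {M : Matrix (Fin n) (Fin n) ℝ} {k : ℕ} {c : ℝ} (hc : 0 ≤ c)
    (hM : ∀ x, ‖M.toEuclideanLin x‖ ≤ c * ‖x‖) : singVal M k ≤ c :=
  Real.sSup_le (by rintro _ ⟨H, -, rfl⟩; exact sInf_eucNorm_mulVec_le hc hM H) hc

theorem singVal_nonneg (M : Matrix (Fin n) (Fin n) ℝ) (k : ℕ) : 0 ≤ singVal M k :=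
  Real.sSup_nonneg <| by
    rintro _ ⟨H, -, rfl⟩
    exact Real.sInf_nonneg <| by rintro _ ⟨v, -, -, rfl⟩; exact Real.sqrt_nonneg _

theorem le_singVal {M : Matrix (Fin n) (Fin n) ℝ} {k : ℕ} (hk : 0 < k)
    (H : Submodule ℝ (EuclideanSpace ℝ (Fin n))) (hH : Module.finrank ℝ H = k) {c : ℝ}
    (hc : ∀ x ∈ H, c * ‖x‖ ≤ ‖M.toEuclideanLin x‖) : c ≤ singVal M k := by
  set H' := H.map (WithLp.linearEquiv 2 ℝ (Fin n → ℝ)).toLinearMap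
  obtain ⟨x, hxH, hx⟩ := Submodule.exists_mem_ne_zero_of_ne_bot <|
    Submodule.one_le_finrank_iff.1 (hH ▸ hk)
  have hbdd : BddAbove {x : ℝ | ∃ H : Submodule ℝ (Fin n → ℝ), Module.finrank ℝ H = k ∧
      x = sInf {y : ℝ | ∃ v ∈ H, eucNorm v = 1 ∧ y = eucNorm (M *ᵥ v)}} := by
    refine ⟨‖toEuclideanCLM (𝕜 := ℝ) M‖, ?_⟩
    rintro _ ⟨H, -, rfl⟩
    exact sInf_eucNorm_mulVec_le (norm_nonneg _) (toEuclideanCLM (𝕜 := ℝ) M).le_opNorm H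
  refine le_trans ?_ (le_csSup hbdd ⟨H', (WithLp.linearEquiv 2 ℝ _).finrank_map_eq H ▸ hH, rfl⟩)
  refine le_csInf ⟨_, _, Submodule.mem_map_of_mem (H.smul_mem ‖x‖⁻¹ hxH), ?_, rfl⟩ ?_
  · simp [eucNorm_eq_norm_toLp, norm_smul, hx]
  · rintro _ ⟨_, ⟨u, huH, rfl⟩, hu, rfl⟩
    have hu' : ‖u‖ = 1 := by simpa [eucNorm_eq_norm_toLp] using hu
    simpa [eucNorm_mulVec, hu'] using hc u huH

theorem specNorm_nonneg (M : Matrix (Fin n) (Fin n) ℝ) : 0 ≤ specNorm M :=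
  Real.sSup_nonneg <| by rintro _ ⟨v, -, rfl⟩; exact Real.sqrt_nonneg _

theorem norm_le_specNorm_mul (M : Matrix (Fin n) (Fin n) ℝ) (x : EuclideanSpace ℝ (Fin n)) :
    ‖M.toEuclideanLin x‖ ≤ specNorm M * ‖x‖ := by
  have hbdd : BddAbove {x : ℝ | ∃ v : Fin n → ℝ, eucNorm v = 1 ∧ x = eucNorm (M *ᵥ v)} := by
    refine ⟨‖toEuclideanCLM (𝕜 := ℝ) M‖, ?_⟩
    rintro _ ⟨v, hv, rfl⟩
    have h := (toEuclideanCLM (𝕜 := ℝ) M).le_opNorm (WithLp.toLp 2 v)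
    rw [← eucNorm_eq_norm_toLp v, hv, mul_one] at h
    exact (eucNorm_mulVec M v).trans_le h
  have hM : ‖toEuclideanCLM (𝕜 := ℝ) M‖ ≤ specNorm M :=
    ContinuousLinearMap.opNorm_le_of_unit_norm (specNorm_nonneg M) fun u hu =>
      le_csSup hbdd ⟨u.ofLp, by rwa [eucNorm_eq_norm_toLp], by rw [eucNorm_mulVec]; rfl⟩
  exact ((toEuclideanCLM (𝕜 := ℝ) M).le_opNorm x).trans (by gcongr)

theorem norm_le_singVal_one_mul (M : Matrix (Fin n) (Fin n) ℝ) (x : EuclideanSpace ℝ (Fin n)) :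
    ‖M.toEuclideanLin x‖ ≤ singVal M 1 * ‖x‖ := by
  have hM : ‖toEuclideanCLM (𝕜 := ℝ) M‖ ≤ singVal M 1 :=
    ContinuousLinearMap.opNorm_le_of_unit_norm (singVal_nonneg M 1) fun u hu =>
      le_singVal one_pos (ℝ ∙ u) (finrank_span_singleton (norm_ne_zero_iff.1 (by simp [hu])))
        fun v hv => by
          obtain ⟨a, rfl⟩ := Submodule.mem_span_singleton.1 hv
          rw [map_smul, norm_smul, norm_smul, hu, mul_one, mul_comm]
          rfl
  exact ((toEuclideanCLM (𝕜 := ℝ) M).le_opNorm x).trans (by gcongr)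

theorem singVal_le_singVal_one_add_specNorm (A E : Matrix (Fin n) (Fin n) ℝ) (k : ℕ) :
    singVal A k ≤ singVal (A + E) 1 + specNorm E :=
  singVal_le_of_norm_le (add_nonneg (singVal_nonneg _ _) (specNorm_nonneg E)) fun x =>
    calc ‖A.toEuclideanLin x‖ = ‖(A + E).toEuclideanLin x - E.toEuclideanLin x‖ := by simp
      _ ≤ ‖(A + E).toEuclideanLin x‖ + ‖E.toEuclideanLin x‖ := norm_sub_le _ _
      _ ≤ (singVal (A + E) 1 + specNorm E) * ‖x‖ := by
        rw [add_mul]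
        exact add_le_add (norm_le_singVal_one_mul _ _) (norm_le_specNorm_mul _ _)

namespace IsUnitSingVec

variable {M : Matrix (Fin n) (Fin n) ℝ} {σ : ℝ} {v : Fin n → ℝ}

theorem norm_toLp (h : IsUnitSingVec M σ v) : ‖WithLp.toLp 2 v‖ = 1 :=
  eucNorm_eq_norm_toLp v ▸ h.1

theorem inner_toEuclideanLin (h : IsUnitSingVec M σ v) (x : EuclideanSpace ℝ (Fin n)) :
    ⟪M.toEuclideanLin x, M.toEuclideanLin (WithLp.toLp 2 v)⟫ = σ ^ 2 * ⟪x, WithLp.toLp 2 v⟫ := by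
  simp only [toLpLin_apply, EuclideanSpace.inner_eq_star_dotProduct, star_trivial]
  rw [dotProduct_mulVec, ← mulVec_transpose, mulVec_mulVec, h.2, smul_dotProduct, smul_eq_mul]

theorem norm_toEuclideanLin (h : IsUnitSingVec M σ v) (hσ : 0 ≤ σ) :
    ‖M.toEuclideanLin (WithLp.toLp 2 v)‖ = σ := by
  have h2 := h.inner_toEuclideanLin (WithLp.toLp 2 v)
  rw [real_inner_self_eq_norm_sq, real_inner_self_eq_norm_sq, h.norm_toLp, one_pow,
    mul_one] at h2
  exact (pow_left_inj₀ (norm_nonneg _) hσ two_ne_zero).1 h2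

end IsUnitSingVec

/-- On `span {v, x}` the form `‖M y‖²` is diagonal in the orthogonal basis `v, x`, with Rayleigh
quotients `σ₁² ≥ (‖M x‖/‖x‖)²`, so this plane is a Courant–Fischer witness for
`‖M x‖/‖x‖ ≤ σ₂`. -/
theorem norm_le_singVal_two_mul {M : Matrix (Fin n) (Fin n) ℝ} {v : Fin n → ℝ}
    (hv : IsUnitSingVec M (singVal M 1) v) {x : EuclideanSpace ℝ (Fin n)}
    (hx : ⟪x, WithLp.toLp 2 v⟫ = 0) : ‖M.toEuclideanLin x‖ ≤ singVal M 2 * ‖x‖ := by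
  rcases eq_or_ne x 0 with rfl | hx₀
  · simp
  set u := WithLp.toLp 2 v
  set σ₁ := singVal M 1
  set r := ‖M.toEuclideanLin x‖ / ‖x‖
  have hxpos : 0 < ‖x‖ := norm_pos_iff.2 hx₀
  have hr : r * ‖x‖ = ‖M.toEuclideanLin x‖ := div_mul_cancel₀ _ hxpos.ne'
  have hr₀ : 0 ≤ r := by positivity
  have hrσ₁ : r ≤ σ₁ := div_le_of_le_mul₀ hxpos.le (singVal_nonneg M 1)
    (norm_le_singVal_one_mul M x)
  have hMu : ‖M.toEuclideanLin u‖ = σ₁ := hv.norm_toEuclideanLin (singVal_nonneg M 1)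
  have hMux : ⟪M.toEuclideanLin u, M.toEuclideanLin x⟫ = 0 := by
    rw [real_inner_comm, hv.inner_toEuclideanLin, hx, mul_zero]
  have hli : LinearIndependent ℝ ![u, x] := by
    refine linearIndependent_of_ne_zero_of_inner_eq_zero ?_ ?_
    · have hu₀ : u ≠ 0 := norm_ne_zero_iff.1 (by simp [u, hv.norm_toLp])
      simp [Fin.forall_fin_two, hu₀, hx₀]
    · intro i j hij
      fin_cases i <;> fin_cases j <;> simp_all [real_inner_comm]
  suffices r ≤ singVal M 2 by rw [← hr]; gcongr
  refine le_singVal two_pos (Submodule.span ℝ (Set.range ![u, x]))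
    (by simpa using finrank_span_eq_card hli) fun y hy => ?_
  obtain ⟨c, rfl⟩ := Submodule.mem_span_range_iff_exists_fun ℝ |>.1 hy
  simp only [Fin.sum_univ_two, Matrix.cons_val_zero, Matrix.cons_val_one, map_add, map_smul]
  rw [← sq_le_sq₀ (by positivity) (norm_nonneg _), mul_pow, norm_add_sq_real,
    norm_add_sq_real]
  simp only [norm_smul, real_inner_smul_left, real_inner_smul_right]
  rw [real_inner_comm x u, hx, hMux, hMu, ← hr, hv.norm_toLp]
  nlinarith [mul_le_mul_of_nonneg_left (pow_le_pow_left₀ hr₀ hrσ₁ 2) (sq_nonneg ‖c 0‖)]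

theorem sinAngle_eq_sqrt_one_sub_inner_sq (u v : Fin n → ℝ) :
    sinAngle u v = √(1 - ⟪WithLp.toLp 2 u, WithLp.toLp 2 v⟫ ^ 2) := by
  simp [sinAngle, EuclideanSpace.inner_toLp_toLp, dotProduct, mul_comm]

end Matrix

/-- Wedin's `sin θ` theorem for the first singular vectors: there is an absolute constant
`C > 0` such that `sin ∠(v₁, v₁') ≤ C‖E‖/δ` where `δ = σ₁ - σ₂ > 0`. -/
theorem wedin_sin_theorem :
    ∃ C : ℝ, 0 < C ∧
      ∀ (n : ℕ) (A E : Matrix (Fin n) (Fin n) ℝ) (v₁ v₁' : Fin n → ℝ),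
        IsUnitSingVec A (singVal A 1) v₁ →
        IsUnitSingVec (A + E) (singVal (A + E) 1) v₁' →
        0 < singVal A 1 - singVal A 2 →
        sinAngle v₁ v₁' ≤ C * specNorm E / (singVal A 1 - singVal A 2) := by
  refine ⟨2, two_pos, fun n A E v₁ v₁' h₁ h₁' hδ => ?_⟩
  have hsin := sqrt_one_sub_inner_sq_mul_sub_le h₁.norm_toLp h₁'.norm_toLp
    (fun x hx => by rw [h₁.inner_toEuclideanLin, hx, mul_zero])
    (by simpa only [map_add] using h₁'.inner_toEuclideanLin)
    (fun x hx => norm_le_singVal_two_mul h₁ hx) (norm_le_specNorm_mul E) (singVal_nonneg _ 1)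
  rw [← sinAngle_eq_sqrt_one_sub_inner_sq] at hsin
  have hweyl := singVal_le_singVal_one_add_specNorm A E 1
  have hsin₀ : 0 ≤ sinAngle v₁ v₁' := Real.sqrt_nonneg _
  have hsin₁ : sinAngle v₁ v₁' ≤ 1 := Real.sqrt_le_one.2 (sub_le_self _ (sq_nonneg _))
  rw [le_div_iff₀ hδ]
  nlinarith [specNorm_nonneg E]
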